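/- Let u be a word of length n with t > 0, and let q be a queue. Suppose the word q(u) has at least one letter equal to t, is weakly decreasing up to level t, and has exactly |q| letters that are at most t. Then the word u is weakly decreasing up to level t − 1. -/

import Mathlib

open scoped BigOperators Classical

namespace MLQ

/-- Words of length `n` over the positive integers (letters are natural numbers,
with `0` unused). Sites are elements of `Fin n`, thought of cyclically. -/
abbrev Word (n : ℕ) := Fin n → ℕ

variable {n : ℕ}

section Cyclic

variable [NeZero n]

/-- the site `s` steps (cyclically) to the right of `i` -/
def shiftR (i : Fin n) (s : ℕ) : Fin n :=
  ⟨(i.val + s) % n, Nat.mod_lt _ (Nat.pos_of_ne_zero (NeZero.ne n))⟩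

/-- the site `s` steps (cyclically) to the left of `i` -/
def shiftL (i : Fin n) (s : ℕ) : Fin n :=
  ⟨(i.val + n - s % n) % n, Nat.mod_lt _ (Nat.pos_of_ne_zero (NeZero.ne n))⟩

/-- number of steps to go (cyclically) right from `i` to `j` -/
def cdistR (i j : Fin n) : ℕ := (j.val + n - i.val) % n

/-- number of steps to go (cyclically) left from `i` to `j` -/
def cdistL (i j : Fin n) : ℕ := (i.val + n - j.val) % n

/-- first site of `s` weakly to the right (cyclically) of `i` -/
noncomputable def firstRight (i : Fin n) (s : Finset (Fin n)) (h : s.Nonempty) : Fin n :=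
  shiftR i ((s.image (cdistR i)).min' (h.image _))

/-- first site of `s` weakly to the left (cyclically) of `i` -/
noncomputable def firstLeft (i : Fin n) (s : Finset (Fin n)) (h : s.Nonempty) : Fin n :=
  shiftL i ((s.image (cdistL i)).min' (h.image _))

/-- One step of Phase II of the queue algorithm: the state consists of the set of
still-unset sites of the queue together with the partial output word; processing
the letter at site `σ p`, it is placed (unchanged) on the first unset queue site
weakly to the right of `σ p`. -/
noncomputable def step2 (u : Word n) (σ : Equiv.Perm (Fin n))
    (st : Finset (Fin n) × Word n) (p : Fin n) : Finset (Fin n) × Word n :=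
  if h : st.1.Nonempty then
    let j := firstRight (σ p) st.1 h
    (st.1.erase j, Function.update st.2 j (u (σ p)))
  else st

/-- One step of Phase I of the queue algorithm: processing the letter at site `σ p`,
the letter `u (σ p) + 1` is placed on the first unset non-queue site weakly to the
left of `σ p`. -/
noncomputable def step1 (u : Word n) (σ : Equiv.Perm (Fin n))
    (st : Finset (Fin n) × Word n) (p : Fin n) : Finset (Fin n) × Word n :=
  if h : st.1.Nonempty then
    let j := firstLeft (σ p) st.1 h
    (st.1.erase j, Function.update st.2 j (u (σ p) + 1))
  else st

/-- The two-phase queue algorithm computing `q(u)`, using the ordering permutation `σ`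
(so the letters are processed in the order `u (σ 0), u (σ 1), …`): Phase II processes
the `|q|` smallest letters in increasing order, Phase I processes the remaining
letters in decreasing order. -/
noncomputable def queueActWith (q : Finset (Fin n)) (σ : Equiv.Perm (Fin n))
    (u : Word n) : Word n :=
  let s2 := ((List.finRange n).take q.card).foldl (step2 u σ) (q, fun _ => 0)
  let s1 := (((List.finRange n).drop q.card).reverse).foldl (step1 u σ) (qᶜ, s2.2)
  s1.2

/-- `σ` is a valid ordering permutation for the word `u`. -/
def IsSorting (u : Word n) (σ : Equiv.Perm (Fin n)) : Prop := Monotone (u ∘ σ)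

/-- The action `q(u)` of a queue `q` on a word `u`, using the canonical sorting
permutation. -/
noncomputable def act (q : Finset (Fin n)) (u : Word n) : Word n :=
  queueActWith q (Tuple.sort u) u

/-- The action of a tuple of queues `(q_1, …, q_k)` on a word (first `q_1`, then `q_2`, …). -/
noncomputable def mlqAct {k : ℕ} (qs : Fin k → Finset (Fin n)) (u : Word n) : Word n :=
  (List.ofFn qs).foldl (fun w q => act q w) u

end Cyclic

/-- the type of a word: `typeOf u i` is the number of occurrences of the letter `i`. -/
def typeOf (u : Word n) : ℕ → ℕ := fun i => (Finset.univ.filter (fun p => u p = i)).card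

/-- partial sums `p_i(m) = m_1 + ⋯ + m_i` of a type -/
def psum (m : ℕ → ℕ) (i : ℕ) : ℕ := ∑ j ∈ Finset.Icc 1 i, m j

/-- number of classes of a type: the largest `i` with `m i ≠ 0` -/
noncomputable def classes (m : ℕ → ℕ) : ℕ := sSup {i | m i ≠ 0}

/-- a packed word: all classes `1, …, ℓ` occur, where `ℓ` is the number of classes -/
def PackedWord (u : Word n) : Prop :=
  (∀ p, 1 ≤ u p) ∧ ∀ j, 1 ≤ j → j ≤ classes (typeOf u) → typeOf u j ≠ 0

/-- merging classes `i` and `i+1` in a word: all letters `> i` are decremented -/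
def mergeWord (i : ℕ) (u : Word n) : Word n := fun p => if i < u p then u p - 1 else u p

/-- merging classes `i` and `i+1` in a type -/
def mergeType (i : ℕ) (m : ℕ → ℕ) : ℕ → ℕ := fun j =>
  if j < i then m j else if j = i then m i + m (i + 1) else m (j + 1)

/-- `∨^(k)`: decrement all but the `k` smallest letters of a word (meaningful when
`k` is a partial sum of the type of the word). -/
def vee (k : ℕ) (u : Word n) : Word n := fun p =>
  if (Finset.univ.filter (fun q => u q ≤ u p)).card ≤ k then u p else u p - 1

/-- iterated merge `∨_T` (the merges `∨_t` are applied for `t ∈ T` in decreasing order) -/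
def mergeWordT (T : Finset ℕ) (u : Word n) : Word n :=
  (T.sort (· ≤ ·)).foldr mergeWord u

/-- iterated merge `∨_T` on types -/
def mergeTypeT (T : Finset ℕ) (m : ℕ → ℕ) : ℕ → ℕ :=
  (T.sort (· ≤ ·)).foldr mergeType m

/-- the weight of a queue, `∏_{j ∈ q} x_j` -/
noncomputable def qwt (q : Finset (Fin n)) : MvPolynomial (Fin n) ℤ :=
  ∏ j ∈ q, MvPolynomial.X j

/-- the `σ`-twisted spectral weight `⟨u⟩_σ` of a word `u`, with respect to a type `m`
with `k + 1` classes: the sum of the weights of all `σ`-twisted multiline queues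
`(q_1, …, q_k)` of type `m` (i.e. `|q_i| = p_{σ(i)}(m)`) with `u = q(1^n)`. -/
noncomputable def swt [NeZero n] (k : ℕ) (m : ℕ → ℕ) (σ : Equiv.Perm (Fin k))
    (u : Word n) : MvPolynomial (Fin n) ℤ :=
  ∑ qs ∈ Finset.univ.filter (fun qs : Fin k → Finset (Fin n) =>
      (∀ i, (qs i).card = psum m ((σ i : ℕ) + 1)) ∧ mlqAct qs (fun _ => 1) = u),
    ∏ i, qwt (qs i)

/-- the (ordinary) spectral weight `⟨u⟩` of a packed word -/
noncomputable def spec [NeZero n] (u : Word n) : MvPolynomial (Fin n) ℤ :=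
  swt (classes (typeOf u) - 1) (typeOf u) (Equiv.refl _) u

/-- the elementary symmetric polynomial `e_k(x_1, …, x_n)` -/
noncomputable def esym (n k : ℕ) : MvPolynomial (Fin n) ℤ :=
  ∑ t ∈ Finset.powersetCard k (Finset.univ : Finset (Fin n)), ∏ j ∈ t, MvPolynomial.X j

/-- the Gale order `A ⪰ B`: same cardinality, and the `k`-th largest element of `A`
is at least the `k`-th largest element of `B`, for every `k` -/
def Dom (A B : Finset ℕ) : Prop :=
  A.card = B.card ∧ ∀ k < A.card,
    (B.sort (· ≤ ·)).reverse.getD k 0 ≤ (A.sort (· ≤ ·)).reverse.getD k 0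

/-- `A ≫ B`: every element of `A` exceeds every element of `B` -/
def Gg (A B : Finset ℕ) : Prop := ∀ a ∈ A, ∀ b ∈ B, b < a

/-- a word is weakly decreasing up to level `t`: any two sites `p < q` with
`u q ≤ t` satisfy `u p ≥ u q` -/
def WDUpTo (t : ℕ) (u : Word n) : Prop :=
  ∀ p q : Fin n, p < q → u q ≤ t → u q ≤ u p

section Dual

variable [NeZero n]

/-- the cyclic interval `{i, i+1, …, i+t}` -/
def cycInterval (i : Fin n) (t : ℕ) : Finset (Fin n) :=
  (Finset.range (t + 1)).image (shiftR i)

/-- the cyclic interval starting at `i` of length `t` is balanced for the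
configuration `(q₁, q₂)` -/
def BalancedInterval (q1 q2 : Finset (Fin n)) (i : Fin n) (t : ℕ) : Prop :=
  (cycInterval i t ∩ q1).card = (cycInterval i t ∩ q2).card ∧
  ∀ l ≤ t, (cycInterval i l ∩ q2).card ≤ (cycInterval i l ∩ q1).card

/-- a site is balanced if it lies in some balanced interval; equivalently, its
parenthesis (if any) is matched in the cyclic parenthesis-matching of the
configuration -/
def BalancedSite (q1 q2 : Finset (Fin n)) (j : Fin n) : Prop :=
  ∃ i t, t < n ∧ BalancedInterval q1 q2 i t ∧ j ∈ cycInterval i t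

/-- the dual configuration: balanced sites keep their memberships, unbalanced
sites swap their memberships between the two queues -/
noncomputable def dualPair (q1 q2 : Finset (Fin n)) : Finset (Fin n) × Finset (Fin n) :=
  (Finset.univ.filter (fun j => if BalancedSite q1 q2 j then j ∈ q1 else j ∈ q2),
   Finset.univ.filter (fun j => if BalancedSite q1 q2 j then j ∈ q2 else j ∈ q1))

/-- the operator `s_i` on tuples of queues, replacing the (0-indexed) adjacent pair
`(q_i, q_{i+1})` by its dual configuration -/
noncomputable def sOp {k : ℕ} (i : ℕ) (qs : Fin k → Finset (Fin n)) :
    Fin k → Finset (Fin n) := fun j =>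
  if h : i + 1 < k then
    (if j.val = i then (dualPair (qs ⟨i, by omega⟩) (qs ⟨i + 1, h⟩)).1
     else if j.val = i + 1 then (dualPair (qs ⟨i, by omega⟩) (qs ⟨i + 1, h⟩)).2
     else qs j)
  else qs j

end Dual


/-
In Phase II the `i`-th smallest letter is written on the first still unset site of `q`
cyclically to the right of its position. The count hypothesis forces `q` to be exactly the
set of sites of `q(u)` carrying a letter `≤ t`: a letter `> t` on `q` would make every letter
off `q` exceed `t` too. Now let `p < p'` be an inversion of `u` below level `t - 1`, i.e.
`u p < u p' < t`, and let `a`, `b`, `c` be the sites of `q` receiving the letters at `p`, at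
`p'` and a letter `t`, processed in this order. Weak decrease of `q(u)` up to level `t` forces
`c < b < a`, contradicting greediness: if `p' ≤ b`, then `b` (still unset) precedes `a`
cyclically right of `p`; if `b < p'`, then `c` (still unset) precedes `b` cyclically right
of `p'`.
-/

def IsFillStep {α β γ : Type*} [DecidableEq α]
    (f : Finset α × (α → β) → γ → Finset α × (α → β)) (val : γ → β) : Prop :=
  ∀ st c, (st.1.Nonempty →
      ∃ j ∈ st.1, f st c = (st.1.erase j, Function.update st.2 j (val c))) ∧
    (¬ st.1.Nonempty → f st c = st)

namespace IsFillStep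

variable {α β γ : Type*} [DecidableEq α] {f : Finset α × (α → β) → γ → Finset α × (α → β)}
  {val : γ → β}

theorem fst_foldl_subset (hf : IsFillStep f val) (l : List γ) (st : Finset α × (α → β)) :
    (l.foldl f st).1 ⊆ st.1 := by
  induction l generalizing st with
  | nil => exact Finset.Subset.rfl
  | cons c l ih =>
    rw [List.foldl_cons]
    by_cases hne : st.1.Nonempty
    · obtain ⟨j, -, hstep⟩ := (hf st c).1 hne
      rw [hstep]
      exact (ih _).trans (Finset.erase_subset _ _)
    · rw [(hf st c).2 hne]
      exact ih st

theorem snd_foldl_of_notMem (hf : IsFillStep f val) (l : List γ) (st : Finset α × (α → β))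
    {j : α} (hj : j ∉ st.1) : (l.foldl f st).2 j = st.2 j := by
  induction l generalizing st with
  | nil => rfl
  | cons c l ih =>
    rw [List.foldl_cons]
    by_cases hne : st.1.Nonempty
    · obtain ⟨k, hk, hstep⟩ := (hf st c).1 hne
      rw [hstep, ih _ fun h => hj (Finset.mem_of_mem_erase h)]
      exact Function.update_of_ne (ne_of_mem_of_not_mem hk hj).symm _ _
    · rw [(hf st c).2 hne]
      exact ih st hj

theorem card_fst_foldl (hf : IsFillStep f val) (l : List γ) (st : Finset α × (α → β))
    (hl : l.length ≤ st.1.card) : (l.foldl f st).1.card = st.1.card - l.length := by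
  induction l generalizing st with
  | nil => rfl
  | cons c l ih =>
    rw [List.length_cons] at hl
    obtain ⟨j, hj, hstep⟩ := (hf st c).1 (Finset.card_pos.mp (by omega))
    rw [List.foldl_cons, hstep, ih _ (by rw [Finset.card_erase_of_mem hj]; omega),
      Finset.card_erase_of_mem hj, List.length_cons]
    omega

theorem exists_snd_foldl_eq (hf : IsFillStep f val) (l : List γ) (st : Finset α × (α → β))
    {j : α} (hj : j ∈ st.1) (hj' : j ∉ (l.foldl f st).1) :
    ∃ c ∈ l, (l.foldl f st).2 j = val c := by
  induction l generalizing st with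
  | nil => exact absurd hj hj'
  | cons c l ih =>
    rw [List.foldl_cons] at hj' ⊢
    by_cases hne : st.1.Nonempty
    · obtain ⟨k, -, hstep⟩ := (hf st c).1 hne
      rw [hstep] at hj' ⊢
      by_cases hjk : j = k
      · subst hjk
        refine ⟨c, List.mem_cons_self, ?_⟩
        rw [hf.snd_foldl_of_notMem l _ (Finset.notMem_erase _ _)]
        exact Function.update_self _ _ _
      · obtain ⟨c', hc', hval⟩ := ih _ (Finset.mem_erase.mpr ⟨hjk, hj⟩) hj'
        exact ⟨c', List.mem_cons_of_mem _ hc', hval⟩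
    · rw [(hf st c).2 hne] at hj' ⊢
      obtain ⟨c', hc', hval⟩ := ih st hj hj'
      exact ⟨c', List.mem_cons_of_mem _ hc', hval⟩

end IsFillStep

theorem cdistR_of_le {i j : Fin n} (h : i ≤ j) : cdistR i j = (j : ℕ) - i := by
  have := j.isLt
  rw [cdistR, show (j : ℕ) + n - i = n + (j - i) by omega, Nat.add_mod_left,
    Nat.mod_eq_of_lt (by omega)]

theorem cdistR_of_lt {i j : Fin n} (h : j < i) : cdistR i j = (j : ℕ) + n - i :=
  Nat.mod_eq_of_lt (by have := i.isLt; omega)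

/-- `cdistR x` increases along `Fin n` read cyclically from `x`. -/
theorem cdistR_lt_cdistR {x a b : Fin n} (hba : b < a) (hx : x ≤ b ∨ a < x) :
    cdistR x b < cdistR x a := by
  rcases hx with hx | hx
  · rw [cdistR_of_le hx, cdistR_of_le (hx.trans hba.le)]
    omega
  · rw [cdistR_of_lt (hba.trans hx), cdistR_of_lt hx]
    omega

theorem WDUpTo.lt_of_apply_lt {t : ℕ} {w : Word n} (h : WDUpTo t w) {a b : Fin n}
    (hab : w a < w b) (hb : w b ≤ t) : b < a :=
  lt_of_not_ge fun hba => by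
    rcases hba.lt_or_eq with hlt | rfl
    · exact (h a b hlt hb).not_gt hab
    · exact hab.false

section Queue

variable [NeZero n]

theorem shiftR_cdistR (i j : Fin n) : shiftR i (cdistR i j) = j := by
  apply Fin.ext
  have := i.isLt
  rw [shiftR, cdistR, Fin.val_mk, Nat.add_mod_mod,
    show (i : ℕ) + (j + n - i) = j + n by omega, Nat.add_mod_right, Nat.mod_eq_of_lt j.isLt]

theorem shiftL_cdistL (i j : Fin n) : shiftL i (cdistL i j) = j := by
  apply Fin.ext
  have := i.isLt
  have := j.isLt
  rw [shiftL, cdistL, Fin.val_mk, Nat.mod_mod]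
  rcases le_or_gt (j : ℕ) i with h | h
  · rw [show (i : ℕ) + n - j = n + (i - j) by omega, Nat.add_mod_left,
      Nat.mod_eq_of_lt (by omega : (i : ℕ) - j < n), show (i : ℕ) + n - (i - j) = j + n by omega,
      Nat.add_mod_right, Nat.mod_eq_of_lt j.isLt]
  · rw [Nat.mod_eq_of_lt (by omega : (i : ℕ) + n - j < n),
      show (i : ℕ) + n - (i + n - j) = j by omega, Nat.mod_eq_of_lt j.isLt]

theorem firstRight_mem (i : Fin n) (s : Finset (Fin n)) (h : s.Nonempty) :
    firstRight i s h ∈ s := by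
  obtain ⟨j, hj, hd⟩ := Finset.mem_image.mp ((s.image (cdistR i)).min'_mem (h.image _))
  rwa [firstRight, ← hd, shiftR_cdistR]

theorem cdistR_firstRight_le (i : Fin n) {s : Finset (Fin n)} (h : s.Nonempty) {j : Fin n}
    (hj : j ∈ s) : cdistR i (firstRight i s h) ≤ cdistR i j := by
  obtain ⟨k, -, hd⟩ := Finset.mem_image.mp ((s.image (cdistR i)).min'_mem (h.image _))
  rw [firstRight, ← hd, shiftR_cdistR, hd]
  exact Finset.min'_le _ _ (Finset.mem_image_of_mem _ hj)

theorem firstLeft_mem (i : Fin n) (s : Finset (Fin n)) (h : s.Nonempty) :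
    firstLeft i s h ∈ s := by
  obtain ⟨j, hj, hd⟩ := Finset.mem_image.mp ((s.image (cdistL i)).min'_mem (h.image _))
  rwa [firstLeft, ← hd, shiftL_cdistL]

variable (u : Word n) (σ : Equiv.Perm (Fin n)) (q : Finset (Fin n))

theorem isFillStep_step2 : IsFillStep (step2 u σ) fun c => u (σ c) := fun st c =>
  ⟨fun h => ⟨firstRight (σ c) st.1 h, firstRight_mem _ _ h, by simp [step2, h]⟩,
    fun h => by simp only [step2, dif_neg h]⟩

theorem isFillStep_step1 : IsFillStep (step1 u σ) fun c => u (σ c) + 1 := fun st c =>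
  ⟨fun h => ⟨firstLeft (σ c) st.1 h, firstLeft_mem _ _ h, by simp [step1, h]⟩,
    fun h => by simp only [step1, dif_neg h]⟩

noncomputable def phaseTwoState (i : ℕ) : Finset (Fin n) × Word n :=
  ((List.finRange n).take i).foldl (step2 u σ) (q, fun _ => 0)

/-- Meaningful for `i < q.card` only. -/
noncomputable def phaseTwoSite (i : Fin n) : Fin n :=
  if h : (phaseTwoState u σ q i).1.Nonempty then firstRight (σ i) _ h else σ i

variable {u σ q}

theorem phaseTwoState_eq_foldl {i k : ℕ} (hik : i ≤ k) :
    phaseTwoState u σ q k =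
      (((List.finRange n).take k).drop i).foldl (step2 u σ) (phaseTwoState u σ q i) := by
  rw [phaseTwoState, phaseTwoState, ← List.foldl_append]
  conv_lhs => rw [← List.take_append_drop i (List.take k _), List.take_take, min_eq_left hik]

theorem phaseTwoState_antitone : Antitone fun i => (phaseTwoState u σ q i).1 :=
  fun _ _ hik => by
    simp only [phaseTwoState_eq_foldl hik]
    exact (isFillStep_step2 u σ).fst_foldl_subset _ _

variable (u σ) in
theorem card_phaseTwoState {i : ℕ} (hi : i ≤ q.card) :
    (phaseTwoState u σ q i).1.card = q.card - i := by
  have hlen : ((List.finRange n).take i).length = i := by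
    have := q.card_le_univ
    simp only [Fintype.card_fin] at this
    simp only [List.length_take, List.length_finRange]
    omega
  rw [phaseTwoState, (isFillStep_step2 u σ).card_fst_foldl _ _ (by rw [hlen]; exact hi), hlen]

variable (u σ) in
theorem phaseTwoState_nonempty {i : ℕ} (hi : i < q.card) :
    (phaseTwoState u σ q i).1.Nonempty :=
  Finset.card_pos.mp (by rw [card_phaseTwoState u σ hi.le]; omega)

theorem phaseTwoState_succ {i : Fin n} (hi : (i : ℕ) < q.card) :
    phaseTwoState u σ q (i + 1) =
      ((phaseTwoState u σ q i).1.erase (phaseTwoSite u σ q i),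
        Function.update (phaseTwoState u σ q i).2 (phaseTwoSite u σ q i) (u (σ i))) := by
  have hne := phaseTwoState_nonempty u σ hi
  have htake : (List.finRange n).take (i + 1) = (List.finRange n).take i ++ [i] := by
    rw [List.take_add_one, List.getElem?_eq_getElem (by simp), List.getElem_finRange]
    rfl
  rw [phaseTwoState, htake, List.foldl_append, ← phaseTwoState, List.foldl_cons, List.foldl_nil,
    step2, dif_pos hne, phaseTwoSite, dif_pos hne]

theorem phaseTwoSite_mem {i : Fin n} (hi : (i : ℕ) < q.card) :
    phaseTwoSite u σ q i ∈ (phaseTwoState u σ q i).1 := by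
  have hne := phaseTwoState_nonempty u σ hi
  rw [phaseTwoSite, dif_pos hne]
  exact firstRight_mem _ _ hne

theorem cdistR_phaseTwoSite_le {i : Fin n} (hi : (i : ℕ) < q.card) {j : Fin n}
    (hj : j ∈ (phaseTwoState u σ q i).1) :
    cdistR (σ i) (phaseTwoSite u σ q i) ≤ cdistR (σ i) j := by
  have hne := phaseTwoState_nonempty u σ hi
  rw [phaseTwoSite, dif_pos hne]
  exact cdistR_firstRight_le _ hne hj

theorem phaseTwoSite_mem_of_le {i k : Fin n} (hik : i ≤ k) (hk : (k : ℕ) < q.card) :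
    phaseTwoSite u σ q k ∈ (phaseTwoState u σ q i).1 :=
  phaseTwoState_antitone (Fin.le_def.mp hik) (phaseTwoSite_mem hk)

theorem snd_phaseTwoState_card {i : Fin n} (hi : (i : ℕ) < q.card) :
    (phaseTwoState u σ q q.card).2 (phaseTwoSite u σ q i) = u (σ i) := by
  have hset : phaseTwoSite u σ q i ∉ (phaseTwoState u σ q (i + 1)).1 := by
    rw [phaseTwoState_succ hi]
    exact Finset.notMem_erase _ _
  rw [phaseTwoState_eq_foldl hi, (isFillStep_step2 u σ).snd_foldl_of_notMem _ _ hset,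
    phaseTwoState_succ hi]
  exact Function.update_self _ _ _

variable (u σ) in
theorem exists_phaseTwoSite_eq {j : Fin n} (hj : j ∈ q) :
    ∃ i : Fin n, (i : ℕ) < q.card ∧ phaseTwoSite u σ q i = j := by
  by_contra! hsite
  have hmem : ∀ k ≤ q.card, j ∈ (phaseTwoState u σ q k).1 := by
    intro k hk
    induction k with
    | zero => exact hj
    | succ k ih =>
      have hkq : k < q.card := hk
      have hkn : k < n := hkq.trans_le (q.card_le_univ.trans_eq (Fintype.card_fin n))
      rw [show k + 1 = ((⟨k, hkn⟩ : Fin n) : ℕ) + 1 from rfl, phaseTwoState_succ hkq]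
      exact Finset.mem_erase.mpr ⟨(hsite _ hkq).symm, ih hkq.le⟩
  have hempty := card_phaseTwoState u σ (le_refl q.card)
  rw [Nat.sub_self, Finset.card_eq_zero] at hempty
  simpa [hempty] using hmem q.card le_rfl

theorem queueActWith_of_mem {j : Fin n} (hj : j ∈ q) :
    queueActWith q σ u j = (phaseTwoState u σ q q.card).2 j :=
  (isFillStep_step1 u σ).snd_foldl_of_notMem _ _ (Finset.notMem_compl.mpr hj)

theorem queueActWith_phaseTwoSite {i : Fin n} (hi : (i : ℕ) < q.card) :
    queueActWith q σ u (phaseTwoSite u σ q i) = u (σ i) := by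
  have hq : phaseTwoSite u σ q i ∈ q :=
    phaseTwoState_antitone (Nat.zero_le (i : ℕ)) (phaseTwoSite_mem hi)
  rw [queueActWith_of_mem hq, snd_phaseTwoState_card hi]

variable (u σ) in
theorem exists_queueActWith_eq_of_notMem {j : Fin n} (hj : j ∉ q) :
    ∃ i : Fin n, q.card ≤ i ∧ queueActWith q σ u j = u (σ i) + 1 := by
  set l := ((List.finRange n).drop q.card).reverse
  set st : Finset (Fin n) × Word n := (qᶜ, (phaseTwoState u σ q q.card).2)
  have hl : l.length = st.1.card := by simp [l, st, Finset.card_compl]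
  have hfilled : (l.foldl (step1 u σ) st).1 = ∅ := Finset.card_eq_zero.mp <| by
    rw [(isFillStep_step1 u σ).card_fst_foldl _ _ hl.le, hl, Nat.sub_self]
  obtain ⟨i, hi, hval⟩ := (isFillStep_step1 u σ).exists_snd_foldl_eq l st
    (Finset.mem_compl.mpr hj) (hfilled ▸ Finset.notMem_empty j)
  obtain ⟨k, hk, rfl⟩ := List.mem_drop_iff_getElem.mp (List.mem_reverse.mp hi)
  exact ⟨_, by simp, hval⟩

variable {t : ℕ}

theorem queueActWith_le_of_mem (hσ : IsSorting u σ)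
    (hcard : (Finset.univ.filter fun p => queueActWith q σ u p ≤ t).card = q.card)
    {j : Fin n} (hj : j ∈ q) : queueActWith q σ u j ≤ t := by
  by_contra! hgt
  obtain ⟨i, hi, rfl⟩ := exists_phaseTwoSite_eq u σ hj
  rw [queueActWith_phaseTwoSite hi] at hgt
  have hsub : Finset.univ.filter (fun p => queueActWith q σ u p ≤ t) ⊆
      q.erase (phaseTwoSite u σ q i) := by
    intro k hk
    rw [Finset.mem_filter] at hk
    by_cases hkq : k ∈ q
    · refine Finset.mem_erase.mpr ⟨?_, hkq⟩
      rintro rfl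
      rw [queueActWith_phaseTwoSite hi] at hk
      omega
    · obtain ⟨i', hi', hval⟩ := exists_queueActWith_eq_of_notMem u σ hkq
      have : u (σ i) ≤ u (σ i') := hσ (Fin.le_def.mpr (hi.le.trans hi'))
      omega
  have := Finset.card_le_card hsub
  rw [hcard, Finset.card_erase_of_mem hj] at this
  omega

theorem mem_of_queueActWith_le (hσ : IsSorting u σ)
    (hcard : (Finset.univ.filter fun p => queueActWith q σ u p ≤ t).card = q.card)
    {j : Fin n} (hj : queueActWith q σ u j ≤ t) : j ∈ q := by
  have hq : q = Finset.univ.filter fun p => queueActWith q σ u p ≤ t :=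
    Finset.eq_of_subset_of_card_le
      (fun k hk => Finset.mem_filter.mpr ⟨Finset.mem_univ k, queueActWith_le_of_mem hσ hcard hk⟩)
      hcard.le
  rw [hq]
  exact Finset.mem_filter.mpr ⟨Finset.mem_univ j, hj⟩

theorem wdUpTo_pred_of_queueActWith (hσ : IsSorting u σ)
    (hmax : ∃ p, queueActWith q σ u p = t) (hwd : WDUpTo t (queueActWith q σ u))
    (hcard : (Finset.univ.filter fun p => queueActWith q σ u p ≤ t).card = q.card) :
    WDUpTo (t - 1) u := by
  intro p p' hpp' hp'
  obtain ⟨i, rfl⟩ := σ.surjective p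
  obtain ⟨m, rfl⟩ := σ.surjective p'
  by_contra! hinv
  obtain ⟨pt, hpt⟩ := hmax
  obtain ⟨r, hr, rfl⟩ :=
    exists_phaseTwoSite_eq u σ (mem_of_queueActWith_le hσ hcard hpt.le)
  rw [queueActWith_phaseTwoSite hr] at hpt
  have hmr : m < r := lt_of_not_ge fun h => by have : u (σ r) ≤ u (σ m) := hσ h; omega
  have him : i < m := lt_of_not_ge fun h => by have : u (σ m) ≤ u (σ i) := hσ h; omega
  have hm : (m : ℕ) < q.card := (Fin.lt_def.mp hmr).trans hr
  have hi : (i : ℕ) < q.card := (Fin.lt_def.mp him).trans hm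
  set a := phaseTwoSite u σ q i
  set b := phaseTwoSite u σ q m
  set c := phaseTwoSite u σ q r
  have hwa : queueActWith q σ u a = u (σ i) := queueActWith_phaseTwoSite hi
  have hwb : queueActWith q σ u b = u (σ m) := queueActWith_phaseTwoSite hm
  have hwc : queueActWith q σ u c = t := (queueActWith_phaseTwoSite hr).trans hpt
  have hba : b < a := hwd.lt_of_apply_lt (by rwa [hwa, hwb]) (by rw [hwb]; omega)
  have hcb : c < b := hwd.lt_of_apply_lt (by rw [hwb, hwc]; omega) hwc.le
  have ha : cdistR (σ i) a ≤ cdistR (σ i) b :=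
    cdistR_phaseTwoSite_le hi (phaseTwoSite_mem_of_le him.le hm)
  have hb : cdistR (σ m) b ≤ cdistR (σ m) c :=
    cdistR_phaseTwoSite_le hm (phaseTwoSite_mem_of_le hmr.le hr)
  rcases le_or_gt (σ m) b with hmb | hbm
  · exact (cdistR_lt_cdistR hba (Or.inl (hpp'.le.trans hmb))).not_ge ha
  · exact (cdistR_lt_cdistR hcb (Or.inr hbm)).not_ge hb

end Queue

theorem wd_of_queue_act_general {n t : ℕ} [NeZero n] (u : Word n)
    (q : Finset (Fin n))
    (h1 : ∃ p, act q u p = t)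
    (h2 : WDUpTo t (act q u))
    (h3 : (Finset.univ.filter (fun p => act q u p ≤ t)).card = q.card) :
    WDUpTo (t - 1) u :=
  wdUpTo_pred_of_queueActWith (Tuple.monotone_sort u) h1 h2 h3

/-- If `q(u)` has at least one letter equal to `t`, is weakly decreasing up to level `t`,
and has exactly `|q|` letters that are at most `t`, then `u` is weakly decreasing up
to level `t - 1`. -/
theorem wd_of_queue_act {n t : ℕ} [NeZero n] (ht : 0 < t) (u : Word n)
    (q : Finset (Fin n))
    (h1 : ∃ p, act q u p = t)
    (h2 : WDUpTo t (act q u))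
    (h3 : (Finset.univ.filter (fun p => act q u p ≤ t)).card = q.card) :
    WDUpTo (t - 1) u :=
  wd_of_queue_act_general u q h1 h2 h3

end MLQ
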